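/- Under the single spike model with Gaussian data and fixed sample size n, if d/λ_1 → 0 as d → ∞, then λ̂_1/λ_1 converges almost surely to χ²_n/n, where χ²_n/n means the random variable (1/n)Σ_{i=1}^n z_{i,1}² with z_{i,1} i.i.d. standard normal; i.e., λ̂_1/λ_1 − (1/n)Z̃_1ᵀZ̃_1 → 0 almost surely. -/

import Mathlib

/-!
Write `X_i = U Λ^{1/2} z_i` with `Λ = diag(λ_1, 1, …, 1)`. The top sample eigenvalue `λ̂_1` lies
between the Rayleigh quotient of `Σ̂` at the population spike direction `U e_1`, which is exactly
`λ_1 · (1/n) Σ_i z_{i,1}²`, and the trace of `Σ̂`, which exceeds that by at most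
`(1/n) Σ_i Σ_{j ≤ d} z_{i,j}²`. By the strong law of large numbers each inner sum is `O(d)`
almost surely, so after division by `λ_1` the gap vanishes because `d/λ_1 → 0`.
-/

open Matrix MeasureTheory ProbabilityTheory Filter Finset Topology

lemma strong_law_ae_sq {Ω : Type*} [MeasurableSpace Ω] {P : Measure Ω} {ν : Measure ℝ}
    [IsProbabilityMeasure ν] {w : ℕ → Ω → ℝ} (hint : Integrable (fun x => x ^ 2) ν)
    (hindep : Pairwise fun j k => w j ⟂ᵢ[P] w k) (hlaw : ∀ j, P.map (w j) = ν) :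
    ∀ᵐ ω ∂P, Tendsto (fun m : ℕ => (∑ j ∈ range m, w j ω ^ 2) / m) atTop
      (𝓝 (∫ x, x ^ 2 ∂ν)) := by
  have hident : ∀ j, IdentDistrib (w j) id P ν := fun j =>
    ⟨.of_map_ne_zero (by simp [hlaw, IsProbabilityMeasure.ne_zero]), aemeasurable_id,
      by simp [hlaw]⟩
  have hsq : Measurable fun x : ℝ => x ^ 2 := by fun_prop
  have hident_sq : ∀ j, IdentDistrib (fun ω => w j ω ^ 2) (fun x => x ^ 2) P ν :=
    fun j => (hident j).comp hsq
  have := strong_law_ae_real (fun j ω => w j ω ^ 2) ((hident_sq 0).integrable_iff.2 hint)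
    (fun j k hjk => (hindep hjk).comp hsq hsq) (fun j => (hident_sq j).trans (hident_sq 0).symm)
  rwa [(hident_sq 0).integral_eq] at this

section Spectral

variable {m : Type*} [Fintype m] [DecidableEq m] {Q : Matrix m m ℝ} {L : m → ℝ}

lemma dotProduct_mulVec_conj_diagonal (v : m → ℝ) :
    v ⬝ᵥ ((Q * diagonal L * Qᵀ) *ᵥ v) = ∑ k, L k * (Qᵀ *ᵥ v) k ^ 2 := by
  rw [← mulVec_mulVec, ← mulVec_mulVec, dotProduct_mulVec, ← mulVec_transpose]
  simp only [dotProduct, mulVec_diagonal]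
  exact sum_congr rfl fun k _ => by ring

lemma dotProduct_mulVec_mulVec_of_transpose_mul_self (hQ : Qᵀ * Q = 1) (a b : m → ℝ) :
    (Q *ᵥ a) ⬝ᵥ (Q *ᵥ b) = a ⬝ᵥ b := by
  rw [dotProduct_mulVec, ← mulVec_transpose, mulVec_mulVec, hQ, one_mulVec]

lemma nonneg_of_posSemidef_conj_diagonal (hQ : Qᵀ * Q = 1)
    (h : (Q * diagonal L * Qᵀ).PosSemidef) : 0 ≤ L := by
  have hconj := h.conjTranspose_mul_mul_same Q
  rwa [conjTranspose_eq_transpose_of_trivial, Matrix.mul_assoc, Matrix.mul_assoc, hQ,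
    Matrix.mul_one, ← Matrix.mul_assoc, hQ, Matrix.one_mul, posSemidef_diagonal_iff] at hconj

lemma le_trace_conj_diagonal (hQ : Qᵀ * Q = 1) (hL : 0 ≤ L) (k : m) :
    L k ≤ (Q * diagonal L * Qᵀ).trace := by
  rw [trace_mul_cycle, hQ, Matrix.one_mul, trace_diagonal]
  exact single_le_sum (fun l _ => hL l) (mem_univ k)

lemma dotProduct_mulVec_conj_diagonal_le (hQ : Qᵀ * Q = 1) {k₀ : m} (hmax : ∀ k, L k ≤ L k₀)
    (v : m → ℝ) : v ⬝ᵥ ((Q * diagonal L * Qᵀ) *ᵥ v) ≤ L k₀ * (v ⬝ᵥ v) := by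
  have hnorm : ∑ k, (Qᵀ *ᵥ v) k ^ 2 = v ⬝ᵥ v := by
    simpa [dotProduct, sq] using dotProduct_mulVec_mulVec_of_transpose_mul_self
      (Q := Qᵀ) (by rw [transpose_transpose, mul_eq_one_comm.mp hQ]) v v
  rw [dotProduct_mulVec_conj_diagonal, ← hnorm, mul_sum]
  exact sum_le_sum fun k _ => mul_le_mul_of_nonneg_right (hmax k) (sq_nonneg _)

end Spectral

section SampleCovariance

variable {ι m : Type*} [Fintype m] (c : ℝ) (s : Finset ι) (Y : ι → m → ℝ)

lemma posSemidef_smul_sum_vecMulVec_self (hc : 0 ≤ c) :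
    (c • ∑ i ∈ s, vecMulVec (Y i) (Y i)).PosSemidef :=
  (posSemidef_sum s fun i _ => by
    simpa using posSemidef_vecMulVec_self_star (Y i)).smul hc

lemma dotProduct_smul_sum_vecMulVec_mulVec (v : m → ℝ) :
    v ⬝ᵥ ((c • ∑ i ∈ s, vecMulVec (Y i) (Y i)) *ᵥ v) = c * ∑ i ∈ s, (Y i ⬝ᵥ v) ^ 2 := by
  simp only [smul_mulVec, sum_mulVec, vecMulVec_mulVec, dotProduct_smul, dotProduct_sum]
  simp [dotProduct_comm v, sq]

lemma trace_smul_sum_vecMulVec :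
    (c • ∑ i ∈ s, vecMulVec (Y i) (Y i)).trace = c * ∑ i ∈ s, Y i ⬝ᵥ Y i := by
  simp [trace_sum]

end SampleCovariance

lemma quadratic_le_eigenvalue_le_trace {ι m : Type*} [Fintype m] [DecidableEq m] {c : ℝ}
    (hc : 0 ≤ c) {s : Finset ι} {Y : ι → m → ℝ} {Q : Matrix m m ℝ} {L : m → ℝ}
    (hQ : Qᵀ * Q = 1) (hM : c • ∑ i ∈ s, vecMulVec (Y i) (Y i) = Q * diagonal L * Qᵀ)
    {k₀ : m} (hmax : ∀ k, L k ≤ L k₀) {v : m → ℝ} (hv : v ⬝ᵥ v = 1) :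
    c * ∑ i ∈ s, (Y i ⬝ᵥ v) ^ 2 ≤ L k₀ ∧ L k₀ ≤ c * ∑ i ∈ s, Y i ⬝ᵥ Y i := by
  constructor
  · simpa [← dotProduct_smul_sum_vecMulVec_mulVec, hM, hv] using
      dotProduct_mulVec_conj_diagonal_le hQ hmax v
  · rw [← trace_smul_sum_vecMulVec, hM]
    refine le_trace_conj_diagonal hQ (nonneg_of_posSemidef_conj_diagonal hQ ?_) k₀
    exact hM ▸ posSemidef_smul_sum_vecMulVec_self c s Y hc

/-- `Λ^{1/2} w` for the spiked covariance `Λ = diag(lam, 1, …, 1)` in dimension `d`. -/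
noncomputable def spikedScores (lam : ℝ) (d : ℕ) (w : ℕ → ℝ) : Fin d → ℝ :=
  fun j => √(if (j : ℕ) = 0 then lam else 1) * w j

lemma spikedScores_dotProduct_single {lam : ℝ} {d : ℕ} (hd : 0 < d) (w : ℕ → ℝ) :
    spikedScores lam d w ⬝ᵥ Pi.single ⟨0, hd⟩ 1 = √lam * w 0 := by
  simp [spikedScores]

lemma dotProduct_self_spikedScores {lam : ℝ} (hlam : 0 ≤ lam) {d : ℕ} (hd : 0 < d)
    (w : ℕ → ℝ) :
    spikedScores lam d w ⬝ᵥ spikedScores lam d w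
      = (lam - 1) * w 0 ^ 2 + ∑ j ∈ range d, w j ^ 2 := by
  obtain ⟨d, rfl⟩ := Nat.exists_eq_add_one_of_ne_zero hd.ne'
  rw [dotProduct, Fin.sum_univ_succ, sum_range_succ',
    ← Fin.sum_univ_eq_sum_range (fun j => w (j + 1) ^ 2)]
  simp only [spikedScores, Fin.coe_ofNat_eq_mod, Nat.zero_mod, ↓reduceIte, ← sq, mul_pow,
    Real.sq_sqrt hlam, Fin.val_succ, Nat.add_eq_zero_iff, one_ne_zero, and_false, Real.sqrt_one,
    one_mul]
  ring

lemma spiked_top_eigenvalue_bounds {ι : Type*} {d : ℕ} (hd : 0 < d) {lam : ℝ} (hlam : 0 ≤ lam)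
    {U : Matrix (Fin d) (Fin d) ℝ} (hU : Uᵀ * U = 1) {c : ℝ} (hc : 0 ≤ c) {s : Finset ι}
    {w : ι → ℕ → ℝ} {Q : Matrix (Fin d) (Fin d) ℝ} {L : Fin d → ℝ} (hL : Antitone L)
    (hQ : Qᵀ * Q = 1)
    (hM : c • ∑ i ∈ s, vecMulVec (U *ᵥ spikedScores lam d (w i)) (U *ᵥ spikedScores lam d (w i))
      = Q * diagonal L * Qᵀ) :
    lam * (c * ∑ i ∈ s, w i 0 ^ 2) ≤ L ⟨0, hd⟩ ∧
      L ⟨0, hd⟩ ≤ lam * (c * ∑ i ∈ s, w i 0 ^ 2) + c * ∑ i ∈ s, ∑ j ∈ range d, w i j ^ 2 := by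
  have hv : (U *ᵥ Pi.single ⟨0, hd⟩ 1) ⬝ᵥ (U *ᵥ Pi.single ⟨0, hd⟩ 1) = 1 := by
    rw [dotProduct_mulVec_mulVec_of_transpose_mul_self hU]
    simp
  obtain ⟨hlow, hup⟩ := quadratic_le_eigenvalue_le_trace hc hQ hM
    (k₀ := ⟨0, hd⟩) (fun k => hL (Nat.zero_le k)) hv
  simp only [dotProduct_mulVec_mulVec_of_transpose_mul_self hU, spikedScores_dotProduct_single,
    dotProduct_self_spikedScores hlam hd, mul_pow, Real.sq_sqrt hlam, ← mul_sum,
    sum_add_distrib, mul_add] at hlow hup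
  have hc0 : 0 ≤ c * ∑ i ∈ s, w i 0 ^ 2 := by positivity
  constructor <;> linarith

lemma tendsto_div_sub_of_le_of_le {α : Type*} {l : Filter α} {a lam S : α → ℝ} {c : ℝ}
    (hlam : ∀ t, 0 < lam t) (hlow : ∀ t, lam t * c ≤ a t) (hup : ∀ t, a t ≤ lam t * c + S t)
    (hS : Tendsto (fun t => S t / lam t) l (𝓝 0)) :
    Tendsto (fun t => a t / lam t - c) l (𝓝 0) := by
  have hrepr : ∀ t, a t / lam t - c = (a t - lam t * c) / lam t := fun t => by
    field_simp [(hlam t).ne']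
  refine squeeze_zero (fun t => ?_) (fun t => ?_) hS <;> rw [hrepr]
  · exact div_nonneg (sub_nonneg.2 (hlow t)) (hlam t).le
  · exact div_le_div_of_nonneg_right (by linarith [hup t]) (hlam t).le

lemma tendsto_sum_sum_range_div {α : Type*} {l : Filter α} {x : ℕ → ℕ → ℝ} {ℓ : ℕ → ℝ}
    (hrow : ∀ i, Tendsto (fun m : ℕ => (∑ j ∈ range m, x i j) / m) atTop (𝓝 (ℓ i)))
    {d : α → ℕ} (hd : ∀ t, 0 < d t) (hdinf : Tendsto d l atTop) {lam : α → ℝ}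
    (hratio : Tendsto (fun t => (d t : ℝ) / lam t) l (𝓝 0)) (c : ℝ) (s : Finset ℕ) :
    Tendsto (fun t => (c * ∑ i ∈ s, ∑ j ∈ range (d t), x i j) / lam t) l (𝓝 0) := by
  have hrepr : ∀ t, (c * ∑ i ∈ s, ∑ j ∈ range (d t), x i j) / lam t
      = (d t : ℝ) / lam t * (c * ∑ i ∈ s, (∑ j ∈ range (d t), x i j) / d t) := fun t => by
    have : (d t : ℝ) ≠ 0 := by exact_mod_cast (hd t).ne'
    rw [← sum_div]
    field_simp
  simp only [hrepr]
  simpa using hratio.mul ((tendsto_finsetSum s fun i _ => (hrow i).comp hdinf).const_mul c)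

theorem single_spike_hdlss_eigenvalue_gaussian_general
    {Ω : Type*} [MeasurableSpace Ω] (P : Measure Ω)
    (n : ℕ)
    (z : ℕ × ℕ → Ω → ℝ)
    (hindep : iIndepFun z P)
    (hgauss : ∀ p, Measure.map (z p) P = gaussianReal 0 1)
    (d : ℕ → ℕ) (hd : ∀ t, 1 < d t) (hdinf : Tendsto d atTop atTop)
    (lam1 : ℕ → ℝ) (hpos : ∀ t, 1 < lam1 t)
    (hratio : Tendsto (fun t => (d t : ℝ) / lam1 t) atTop (nhds 0))
    (U : (t : ℕ) → Matrix (Fin (d t)) (Fin (d t)) ℝ)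
    (hU : ∀ t, (U t)ᵀ * U t = 1)
    (X : (t : ℕ) → ℕ → Ω → Fin (d t) → ℝ)
    (hX : ∀ t i ω k, X t i ω k
      = ∑ j, U t k j * Real.sqrt (if (j : ℕ) = 0 then lam1 t else 1) * z (i, (j : ℕ)) ω)
    (lamhat : (t : ℕ) → Ω → Fin (d t) → ℝ)
    (Uhat : (t : ℕ) → Ω → Matrix (Fin (d t)) (Fin (d t)) ℝ)
    (hspec : ∀ t ω, Antitone (lamhat t ω) ∧ (Uhat t ω)ᵀ * Uhat t ω = 1 ∧
      (n : ℝ)⁻¹ • ∑ i ∈ Finset.range n, vecMulVec (X t i ω) (X t i ω)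
        = Uhat t ω * diagonal (lamhat t ω) * (Uhat t ω)ᵀ) :
    ∀ᵐ ω ∂P,
      Tendsto (fun t => lamhat t ω ⟨0, Nat.zero_lt_of_lt (hd t)⟩ / lam1 t
          - (n : ℝ)⁻¹ * ∑ i ∈ Finset.range n, (z (i, 0) ω) ^ 2) atTop (nhds 0) := by
  have hscores : ∀ t i ω, X t i ω = U t *ᵥ spikedScores (lam1 t) (d t) fun j => z (i, j) ω := by
    intro t i ω
    ext k
    simp [hX, mulVec, dotProduct, spikedScores, mul_assoc]
  have hrow : ∀ i, ∀ᵐ ω ∂P, Tendsto (fun m : ℕ => (∑ j ∈ range m, z (i, j) ω ^ 2) / m) atTop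
      (𝓝 (∫ x, x ^ 2 ∂gaussianReal 0 1)) := fun i =>
    strong_law_ae_sq (memLp_id_gaussianReal' 2 (by simp)).integrable_sq
      (fun j k hjk => hindep.indepFun (by simpa using hjk)) (fun j => hgauss _)
  filter_upwards [ae_all_iff.2 hrow] with ω hω
  have hbounds := fun t => by
    obtain ⟨hL, hQ, hM⟩ := hspec t ω
    simp only [hscores] at hM
    exact spiked_top_eigenvalue_bounds (Nat.zero_lt_of_lt (hd t)) (zero_le_one.trans (hpos t).le)
      (hU t) (by positivity) hL hQ hM
  exact tendsto_div_sub_of_le_of_le (fun t => one_pos.trans (hpos t)) (fun t => (hbounds t).1)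
    (fun t => (hbounds t).2)
    (tendsto_sum_sum_range_div hω (fun t => Nat.zero_lt_of_lt (hd t)) hdinf hratio _ _)

/-- Single spike Gaussian model with fixed sample size `n`, dimension `d → ∞`: eigenvalues
`λ_1 → ∞` with `d/λ_1 → 0` and `λ_2 = ⋯ = λ_d = 1`, i.i.d. standard normal scores
`z_{i,j}`. Then `λ̂_1/λ_1` converges almost surely to `χ²_n/n`, i.e.
`λ̂_1/λ_1 − (1/n) Z̃_1ᵀ Z̃_1 → 0` almost surely, where `Z̃_1 = (z_{1,1},…,z_{n,1})ᵀ`. -/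
theorem single_spike_hdlss_eigenvalue_gaussian
    {Ω : Type*} [MeasurableSpace Ω] (P : Measure Ω) [IsProbabilityMeasure P]
    (n : ℕ) (hn : 0 < n)
    (z : ℕ × ℕ → Ω → ℝ)
    (hmeas : ∀ p, Measurable (z p))
    (hindep : iIndepFun z P)
    (hgauss : ∀ p, Measure.map (z p) P = gaussianReal 0 1)
    (d : ℕ → ℕ) (hd : ∀ t, 1 < d t) (hdinf : Tendsto d atTop atTop)
    (lam1 : ℕ → ℝ) (hpos : ∀ t, 1 < lam1 t)
    (hlaminf : Tendsto lam1 atTop atTop)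
    (hratio : Tendsto (fun t => (d t : ℝ) / lam1 t) atTop (nhds 0))
    (U : (t : ℕ) → Matrix (Fin (d t)) (Fin (d t)) ℝ)
    (hU : ∀ t, (U t)ᵀ * U t = 1)
    (X : (t : ℕ) → ℕ → Ω → Fin (d t) → ℝ)
    (hX : ∀ t i ω k, X t i ω k
      = ∑ j, U t k j * Real.sqrt (if (j : ℕ) = 0 then lam1 t else 1) * z (i, (j : ℕ)) ω)
    (lamhat : (t : ℕ) → Ω → Fin (d t) → ℝ)
    (Uhat : (t : ℕ) → Ω → Matrix (Fin (d t)) (Fin (d t)) ℝ)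
    (hspec : ∀ t ω, Antitone (lamhat t ω) ∧ (Uhat t ω)ᵀ * Uhat t ω = 1 ∧
      (n : ℝ)⁻¹ • ∑ i ∈ Finset.range n, vecMulVec (X t i ω) (X t i ω)
        = Uhat t ω * diagonal (lamhat t ω) * (Uhat t ω)ᵀ) :
    ∀ᵐ ω ∂P,
      Tendsto (fun t => lamhat t ω ⟨0, Nat.zero_lt_of_lt (hd t)⟩ / lam1 t
          - (n : ℝ)⁻¹ * ∑ i ∈ Finset.range n, (z (i, 0) ω) ^ 2) atTop (nhds 0) :=
  single_spike_hdlss_eigenvalue_gaussian_general P n z hindep hgauss d hd hdinf lam1 hpos hratio U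
    hU X hX lamhat Uhat hspec
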